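/- arXiv:1706.05181 — 3 statements merged into one kernel-verified Lean document; each statement's English description precedes it below -/
import Mathlib

section
/- For every n ≥ 1, the homological dimension of the complete graph K_n equals n − 2. -/
open Finset

/-- Z/2 boundary of a chain represented as a set of simplices. -/
def bdry {V : Type} [DecidableEq V] (c : Finset (Finset V)) : Finset (Finset V) :=
  (c.sup Finset.powerset).filter fun τ =>
    Odd ((c.filter fun σ => τ ⊆ σ ∧ τ.card + 1 = σ.card).card)

def IsChainOf {V : Type} [DecidableEq V] (K : Finset (Finset V)) (d : ℕ)
    (c : Finset (Finset V)) : Prop :=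
  ∀ σ ∈ c, σ ∈ K ∧ σ.card = d + 1

/-- Reduced simplicial Z/2-homology of the complex `K` is nonzero in dimension `d`. -/
def RedHomNonzero {V : Type} [DecidableEq V] (K : Finset (Finset V)) (d : ℕ) : Prop :=
  ∃ c : Finset (Finset V), IsChainOf K d c ∧ bdry c = ∅ ∧
    ∀ b : Finset (Finset V), IsChainOf K (d + 1) b → bdry b ≠ c

/-- The nerve of a finite family of nonempty finite sets. -/
def nerveF {V ι : Type} [DecidableEq V] [Fintype V] [Fintype ι] [DecidableEq ι]
    (F : ι → Finset V) : Finset (Finset ι) :=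
  Finset.univ.filter fun σ : Finset ι => σ.Nonempty ∧ (σ.inf F).Nonempty

/-- `F` is a connected cover in `G`: a family of (vertex sets of) induced subgraphs,
all of whose nonempty intersections induce connected subgraphs. -/
def IsConnCover {V ι : Type} [DecidableEq V] [Fintype V] [Fintype ι] [DecidableEq ι]
    (G : SimpleGraph V) (F : ι → Finset V) : Prop :=
  (∀ i, (F i).Nonempty) ∧
  ∀ σ : Finset ι, σ.Nonempty → (σ.inf F).Nonempty →
    (G.induce ((σ.inf F : Finset V) : Set V)).Connected

/-- The homological dimension of `G` is at least `d`. -/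
def GammaGe {V : Type} [DecidableEq V] [Fintype V] (G : SimpleGraph V) (d : ℕ) : Prop :=
  ∃ (n : ℕ) (F : Fin n → Finset V), IsConnCover G F ∧ RedHomNonzero (nerveF F) d

/-- The homological dimension of `G` equals the integer `m`:
`m` is the greatest `d` with `GammaGe G d` (and `m = -1` when there is none). -/
def HomDimEq {V : Type} [DecidableEq V] [Fintype V] (G : SimpleGraph V) (m : ℤ) : Prop :=
  (∀ d : ℕ, m < (d : ℤ) → ¬ GammaGe G d) ∧ (∀ d : ℕ, (d : ℤ) = m → GammaGe G d)

/-- `H` is a minor of `G`. -/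
def IsMinor {W V : Type} [Fintype W] [DecidableEq W] [Fintype V] [DecidableEq V]
    (H : SimpleGraph W) (G : SimpleGraph V) : Prop :=
  ∃ B : W → Finset V,
    (∀ w, (B w).Nonempty) ∧
    (∀ u w, u ≠ w → Disjoint (B u) (B w)) ∧
    (∀ w, (G.induce ((B w : Finset V) : Set V)).Connected) ∧
    (∀ u w, H.Adj u w → ∃ a ∈ B u, ∃ b ∈ B w, G.Adj a b)

/-!
A face `σ` of the nerve of a cover `F` of an `n`-vertex graph is a set of indices whose sets share
a vertex `v`, i.e. `σ ⊆ {i | v ∈ F i}`. So the nerve is a union of `n` full simplices, one per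
vertex, whatever the graph; a Mayer–Vietoris induction on `n`, with coning as the base case (a
cycle inside a simplex bounds), shows that its reduced homology vanishes from dimension `n - 1` on.
Conversely, the `n` sets `V \ {v}` form a connected cover of `K_n` whose nerve is the boundary of
the `(n - 1)`-simplex, which carries a nonzero class in dimension `n - 2`.
-/

open scoped symmDiff

namespace Finset

variable {α : Type*} [DecidableEq α] {s t : Finset α} {a : α}

lemma covBy_iff_subset_and_card : s ⋖ t ↔ s ⊆ t ∧ #s + 1 = #t := by
  rw [covBy_iff_card_sdiff_eq_one]
  refine and_congr_right fun h => ?_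
  have := card_le_card h
  rw [card_sdiff_of_subset h]
  omega

instance decidableCovBy : DecidableRel ((· ⋖ ·) : Finset α → Finset α → Prop) :=
  fun _ _ => decidable_of_iff' _ covBy_iff_subset_and_card

lemma erase_covBy_erase_iff (hs : a ∈ s) (ht : a ∈ t) : s.erase a ⋖ t.erase a ↔ s ⋖ t := by
  simp only [covBy_iff_subset_and_card, card_erase_of_mem hs, card_erase_of_mem ht]
  have := card_pos.2 ⟨a, hs⟩
  have := card_pos.2 ⟨a, ht⟩
  refine and_congr ⟨fun h x hx => ?_, fun h => erase_subset_erase a h⟩ (by omega)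
  by_cases hxa : x = a
  · exact hxa ▸ ht
  · exact mem_of_mem_erase (h (mem_erase.2 ⟨hxa, hx⟩))

lemma odd_card_symmDiff : Odd #(s ∆ t) ↔ ¬(Odd #s ↔ Odd #t) := by
  have hst := card_sdiff_add_card_inter s t
  have hts := card_sdiff_add_card_inter t s
  rw [inter_comm] at hts
  rw [Finset.symmDiff_def, card_union_of_disjoint disjoint_sdiff_sdiff]
  simp only [Nat.odd_iff]
  omega

lemma covBy_iff_eq_insert (hs : a ∉ s) (ht : a ∈ t) : s ⋖ t ↔ t = insert a s := by
  refine ⟨fun h => ?_, fun h => h ▸ covBy_insert hs⟩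
  obtain ⟨b, hb, rfl⟩ := h.exists_finset_insert
  obtain rfl | hab := mem_insert.1 ht
  · rfl
  · exact absurd hab hs

lemma filter_symmDiff (p : α → Prop) [DecidablePred p] :
    (s ∆ t).filter p = s.filter p ∆ t.filter p := by
  ext; simp only [mem_filter, mem_symmDiff]; tauto

lemma card_filter_covBy_powerset (h : s ⊆ t) : #{u ∈ t.powerset | s ⋖ u} = #t - #s := by
  have himage : {u ∈ t.powerset | s ⋖ u} = (t \ s).image (insert · s) := by
    ext u
    simp only [mem_filter, mem_powerset, mem_image, mem_sdiff, covBy_iff_exists_insert]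
    constructor
    · rintro ⟨hu, b, hb, rfl⟩
      exact ⟨b, ⟨hu (mem_insert_self b s), hb⟩, rfl⟩
    · rintro ⟨b, ⟨hbt, hb⟩, rfl⟩
      exact ⟨insert_subset hbt h, b, hb, rfl⟩
  rw [himage, card_image_of_injOn, card_sdiff_of_subset h]
  intro b hb b' hb' hbb'
  have hb'' : b ∈ insert b' s := by
    rw [← show insert b s = insert b' s from hbb']
    exact mem_insert_self b s
  exact (mem_insert.1 hb'').resolve_right (mem_sdiff.1 hb).2

end Finset

section Boundary

variable {V : Type} [DecidableEq V] {c : Finset (Finset V)} {σ τ : Finset V}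

lemma mem_bdry : τ ∈ bdry c ↔ Odd #{σ ∈ c | τ ⋖ σ} := by
  simp only [bdry, mem_filter, ← covBy_iff_subset_and_card, and_iff_right_iff_imp]
  intro h
  obtain ⟨σ, hσ⟩ := card_pos.1 h.pos
  rw [mem_filter] at hσ
  exact mem_sup.2 ⟨σ, hσ.1, mem_powerset.2 hσ.2.le⟩

lemma exists_covBy_of_mem_bdry (h : τ ∈ bdry c) : ∃ σ ∈ c, τ ⋖ σ := by
  obtain ⟨σ, hσ⟩ := card_pos.1 (mem_bdry.1 h).pos
  exact ⟨σ, (mem_filter.1 hσ).1, (mem_filter.1 hσ).2⟩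

@[simp] lemma bdry_empty : bdry (∅ : Finset (Finset V)) = ∅ := by
  simp [bdry]

lemma bdry_symmDiff (c₁ c₂ : Finset (Finset V)) : bdry (c₁ ∆ c₂) = bdry c₁ ∆ bdry c₂ := by
  ext τ
  rw [mem_symmDiff, mem_bdry, mem_bdry, mem_bdry, filter_symmDiff, odd_card_symmDiff]
  tauto

lemma mem_bdry_singleton : τ ∈ bdry {σ} ↔ τ ⋖ σ := by
  rw [mem_bdry, filter_singleton]
  split_ifs with h <;> simp [h]

lemma even_card_filter_covBy_covBy (τ σ : Finset V) :
    Even #{ρ ∈ σ.powerset | ρ ⋖ σ ∧ τ ⋖ ρ} := by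
  by_cases h : τ ⊆ σ ∧ #τ + 2 = #σ
  · have hfilter : {ρ ∈ σ.powerset | ρ ⋖ σ ∧ τ ⋖ ρ} = {ρ ∈ σ.powerset | τ ⋖ ρ} := by
      refine filter_congr fun ρ hρ => and_iff_right_of_imp fun hτρ => ?_
      rw [covBy_iff_subset_and_card] at hτρ ⊢
      exact ⟨mem_powerset.1 hρ, by omega⟩
    rw [hfilter, card_filter_covBy_powerset h.1, ← h.2, Nat.add_sub_cancel_left]
    exact even_two
  · have hempty : {ρ ∈ σ.powerset | ρ ⋖ σ ∧ τ ⋖ ρ} = ∅ := by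
      refine filter_eq_empty_iff.2 fun ρ _ hρ => h ?_
      obtain ⟨hρσ, hτρ⟩ := hρ
      rw [covBy_iff_subset_and_card] at hρσ hτρ
      exact ⟨hτρ.1.trans hρσ.1, by omega⟩
    simp [hempty]

lemma bdry_bdry_singleton (σ : Finset V) : bdry (bdry {σ}) = ∅ := by
  have hσ : bdry {σ} = {ρ ∈ σ.powerset | ρ ⋖ σ} := by
    ext ρ
    rw [mem_bdry_singleton, mem_filter, mem_powerset]
    exact ⟨fun h => ⟨h.le, h⟩, And.right⟩
  refine eq_empty_of_forall_notMem fun τ hτ => ?_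
  rw [mem_bdry, hσ, filter_filter] at hτ
  exact Nat.not_odd_iff_even.2 (even_card_filter_covBy_covBy τ σ) hτ

theorem bdry_bdry (c : Finset (Finset V)) : bdry (bdry c) = ∅ := by
  induction c using Finset.induction_on with
  | empty => simp
  | @insert σ c hσ ih =>
    rw [insert_eq, ← symmDiff_eq_union (disjoint_singleton_left.2 hσ), bdry_symmDiff,
      bdry_symmDiff, ih, bdry_bdry_singleton, symmDiff_self, bot_eq_empty]

end Boundary

section Cone

variable {V : Type} [DecidableEq V] {c : Finset (Finset V)} {x : V} {ρ τ : Finset V}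

def cone (x : V) (c : Finset (Finset V)) : Finset (Finset V) :=
  {σ ∈ c | x ∉ σ}.image (insert x)

lemma mem_cone : ρ ∈ cone x c ↔ x ∈ ρ ∧ ρ.erase x ∈ c := by
  simp only [cone, mem_image, mem_filter]
  constructor
  · rintro ⟨σ, ⟨hσ, hx⟩, rfl⟩
    exact ⟨mem_insert_self x σ, by rwa [erase_insert hx]⟩
  · rintro ⟨hx, hρ⟩
    exact ⟨ρ.erase x, ⟨hρ, notMem_erase x ρ⟩, insert_erase hx⟩

lemma card_cone (x : V) (c : Finset (Finset V)) : #(cone x c) = #{σ ∈ c | x ∉ σ} := by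
  refine card_image_of_injOn fun σ hσ σ' hσ' h => ?_
  have hx : x ∉ σ := (mem_filter.1 hσ).2
  have hx' : x ∉ σ' := (mem_filter.1 hσ').2
  rw [← erase_insert hx, ← erase_insert hx']
  exact congrArg (erase · x) h

lemma bdry_cone (x : V) (c : Finset (Finset V)) : bdry (cone x c) = c ∆ cone x (bdry c) := by
  ext τ
  rw [mem_symmDiff, mem_cone, mem_bdry, mem_bdry]
  by_cases hx : x ∈ τ
  · have hfilter : {ρ ∈ cone x c | τ ⋖ ρ} = cone x {σ ∈ c | τ.erase x ⋖ σ} := by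
      ext ρ
      simp only [mem_filter, mem_cone]
      constructor
      · rintro ⟨⟨hρx, hρ⟩, hτρ⟩
        exact ⟨hρx, hρ, (erase_covBy_erase_iff hx hρx).2 hτρ⟩
      · rintro ⟨hρx, hρ, hτρ⟩
        exact ⟨⟨hρx, hρ⟩, (erase_covBy_erase_iff hx hρx).1 hτρ⟩
    have hcontaining : {σ ∈ {σ ∈ c | τ.erase x ⋖ σ} | x ∈ σ} = {σ ∈ c | σ = τ} := by
      rw [filter_filter]
      refine filter_congr fun σ _ => ⟨fun ⟨hτσ, hσx⟩ => ?_, ?_⟩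
      · rw [(covBy_iff_eq_insert (notMem_erase x τ) hσx).1 hτσ, insert_erase hx]
      · rintro rfl
        exact ⟨erase_covBy hx, hx⟩
    have hsplit := card_filter_add_card_filter_not (s := {σ ∈ c | τ.erase x ⋖ σ}) (x ∈ ·)
    rw [hcontaining, filter_eq', ← card_cone] at hsplit
    rw [hfilter, ← hsplit]
    split_ifs with hτ <;> simp [hx, hτ, Nat.odd_add]
  · have hfilter : {ρ ∈ cone x c | τ ⋖ ρ} = ({insert x τ} : Finset _).filter fun _ => τ ∈ c := by
      ext ρ
      simp only [mem_filter, mem_cone, mem_singleton]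
      constructor
      · rintro ⟨⟨hρx, hρ⟩, hτρ⟩
        obtain rfl := (covBy_iff_eq_insert hx hρx).1 hτρ
        exact ⟨rfl, by rwa [erase_insert hx] at hρ⟩
      · rintro ⟨rfl, hτ⟩
        exact ⟨⟨mem_insert_self x τ, by rwa [erase_insert hx]⟩, covBy_insert hx⟩
    rw [hfilter, filter_singleton]
    split_ifs with hτ <;> simp [hx, hτ]

end Cone

section Vanishing

/-- `D` counts the vertices of each face, so this is a chain of dimension `D - 1`. -/
def IsChainIn {V ι : Type} (S : ι → Finset V) (D : ℕ) (c : Finset (Finset V)) : Prop :=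
  ∀ σ ∈ c, #σ = D ∧ ∃ i, σ ⊆ S i

lemma IsChainIn.mono {V ι κ : Type} {S : ι → Finset V} {S' : κ → Finset V} {D : ℕ}
    {c : Finset (Finset V)} (hc : IsChainIn S D c) (h : ∀ i, ∃ j, S i ⊆ S' j) :
    IsChainIn S' D c := fun σ hσ => by
  obtain ⟨hcard, i, hi⟩ := hc σ hσ
  obtain ⟨j, hj⟩ := h i
  exact ⟨hcard, j, hi.trans hj⟩

variable {V : Type} [DecidableEq V]

lemma IsChainIn.symmDiff {ι : Type} {S : ι → Finset V} {D : ℕ} {c₁ c₂ : Finset (Finset V)}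
    (h₁ : IsChainIn S D c₁) (h₂ : IsChainIn S D c₂) : IsChainIn S D (c₁ ∆ c₂) := fun σ hσ =>
  (mem_symmDiff.1 hσ).elim (fun h => h₁ σ h.1) (fun h => h₂ σ h.1)

lemma exists_bdry_eq_of_forall_subset {ι : Type} {S : ι → Finset V} {D : ℕ}
    {c : Finset (Finset V)} (i : ι) (hD : 1 ≤ D) (hc : ∀ σ ∈ c, #σ = D ∧ σ ⊆ S i)
    (hcyc : bdry c = ∅) : ∃ u, IsChainIn S (D + 1) u ∧ bdry u = c := by
  rcases c.eq_empty_or_nonempty with rfl | ⟨σ, hσ⟩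
  · exact ⟨∅, by simp [IsChainIn], bdry_empty⟩
  obtain ⟨hσD, hσS⟩ := hc σ hσ
  obtain ⟨x, hxσ⟩ := card_pos.1 (hσD ▸ hD : 0 < #σ)
  refine ⟨cone x c, fun ρ hρ => ?_, by rw [bdry_cone, hcyc]; simp [cone]⟩
  obtain ⟨hxρ, hρ⟩ := mem_cone.1 hρ
  obtain ⟨hcard, hsub⟩ := hc _ hρ
  exact ⟨by rw [← card_erase_add_one hxρ, hcard], i, (erase_subset_iff_of_mem (hσS hxσ)).1 hsub⟩

theorem IsChainIn.exists_bdry_eq {n D : ℕ} {S : Fin n → Finset V} {c : Finset (Finset V)}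
    (hc : IsChainIn S D c) (hcyc : bdry c = ∅) (hnD : n ≤ D) :
    ∃ b, IsChainIn S (D + 1) b ∧ bdry b = c := by
  induction n generalizing D c with
  | zero =>
    obtain rfl : c = ∅ := eq_empty_of_forall_notMem fun σ hσ => (hc σ hσ).2.elim fun i _ => i.elim0
    exact ⟨∅, by simp [IsChainIn], bdry_empty⟩
  | succ n ih =>
    set T := S (Fin.last n)
    set a := {σ ∈ c | σ ⊆ T}
    set c' := {σ ∈ c | ¬σ ⊆ T}
    have hsplit : a ∆ c' = c := by
      rw [symmDiff_eq_union (disjoint_filter_filter_not _ _ _), filter_union_filter_not_eq]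
    have hac' : bdry a = bdry c' := by
      rw [← symmDiff_eq_empty, ← bdry_symmDiff, hsplit, hcyc]
    have hc' : IsChainIn (fun v : Fin n => S v.castSucc) D c' := fun σ hσ => by
      obtain ⟨hσc, hσT⟩ := mem_filter.1 hσ
      obtain ⟨hcard, v, hv⟩ := hc σ hσc
      obtain ⟨v, rfl⟩ := (Fin.exists_castSucc_eq (i := v)).2 (by rintro rfl; exact hσT hv)
      exact ⟨hcard, v, hv⟩
    have hbdry : IsChainIn (fun v : Fin n => S v.castSucc ∩ T) (D - 1) (bdry a) := by
      intro τ hτ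
      obtain ⟨σ, hσ, hτσ⟩ := exists_covBy_of_mem_bdry hτ
      obtain ⟨σ', hσ', hτσ'⟩ := exists_covBy_of_mem_bdry (hac' ▸ hτ)
      obtain ⟨-, v, hv⟩ := hc' σ' hσ'
      have hcard := (covBy_iff_subset_and_card.1 hτσ).2
      have hσD := (hc σ (mem_filter.1 hσ).1).1
      exact ⟨by omega, v, subset_inter (hτσ'.le.trans hv) (hτσ.le.trans (mem_filter.1 hσ).2)⟩
    -- Fill `∂a = ∂c'` inside the intersections; then `a ∆ w` is a cycle in the last simplex and
    -- `c' ∆ w` one in the first `n` simplices.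
    obtain ⟨w, hw, hwa⟩ := ih hbdry (bdry_bdry a) (by omega)
    rw [Nat.sub_add_cancel (by omega : 1 ≤ D)] at hw
    have hawT : ∀ σ ∈ a ∆ w, #σ = D ∧ σ ⊆ T := by
      intro σ hσ
      rcases mem_symmDiff.1 hσ with ⟨hσa, -⟩ | ⟨hσw, -⟩
      · exact ⟨(hc σ (mem_filter.1 hσa).1).1, (mem_filter.1 hσa).2⟩
      · obtain ⟨hcard, v, hv⟩ := hw σ hσw
        exact ⟨hcard, hv.trans inter_subset_right⟩
    obtain ⟨u, hu, hua⟩ := exists_bdry_eq_of_forall_subset (Fin.last n) (by omega) hawT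
      (by rw [bdry_symmDiff, hwa, symmDiff_self, bot_eq_empty])
    obtain ⟨u', hu', hu'c⟩ := ih (hc'.symmDiff (hw.mono fun v => ⟨v, inter_subset_left⟩))
      (by rw [bdry_symmDiff, hwa, hac', symmDiff_self, bot_eq_empty]) (by omega)
    refine ⟨u ∆ u', hu.symmDiff (hu'.mono fun v => ⟨v.castSucc, subset_rfl⟩), ?_⟩
    rw [bdry_symmDiff, hua, hu'c, symmDiff_symmDiff_symmDiff_comm, symmDiff_self, symmDiff_bot,
      hsplit]

end Vanishing

lemma mem_nerveF {V ι : Type} [DecidableEq V] [Fintype V] [Fintype ι] [DecidableEq ι]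
    {F : ι → Finset V} {σ : Finset ι} : σ ∈ nerveF F ↔ σ.Nonempty ∧ ∃ v, ∀ i ∈ σ, v ∈ F i := by
  simp only [nerveF, mem_filter, mem_univ, true_and, Finset.Nonempty, mem_inf]

theorem not_gammaGe_of_card_le {V : Type} [DecidableEq V] [Fintype V] (G : SimpleGraph V)
    {d : ℕ} (h : Fintype.card V ≤ d + 1) : ¬ GammaGe G d := by
  rintro ⟨m, F, -, c, hc, hcyc, hnb⟩
  let e := Fintype.equivFin V
  let S : Fin (Fintype.card V) → Finset (Fin m) := fun k => {i | e.symm k ∈ F i}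
  have hchain : ∀ {d b}, IsChainOf (nerveF F) d b ↔ IsChainIn S (d + 1) b := by
    refine forall₂_congr fun σ _ => ?_
    rw [mem_nerveF]
    constructor
    · rintro ⟨⟨-, v, hv⟩, hcard⟩
      exact ⟨hcard, e v, fun i hi => by simpa [S] using hv i hi⟩
    · rintro ⟨hcard, k, hk⟩
      exact ⟨⟨card_pos.1 (by omega), e.symm k, fun i hi => (mem_filter.1 (hk hi)).2⟩, hcard⟩
  obtain ⟨b, hb, hbc⟩ := (hchain.1 hc).exists_bdry_eq hcyc h
  exact hnb b (hchain.2 hb) hbc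

lemma connected_induce_top {V : Type} {s : Set V} (hs : s.Nonempty) :
    ((⊤ : SimpleGraph V).induce s).Connected := by
  rw [SimpleGraph.induce_eq_top.2 (SimpleGraph.IsClique.top _)]
  have := hs.to_subtype
  exact SimpleGraph.connected_top

theorem gammaGe_top_sub_two {n : ℕ} (hn : 2 ≤ n) : GammaGe (⊤ : SimpleGraph (Fin n)) (n - 2) := by
  set F : Fin n → Finset (Fin n) := fun i => univ.erase i
  have hnerve : ∀ σ, σ ∈ nerveF F ↔ σ.Nonempty ∧ σ ≠ univ := fun σ => by
    have hinf : σ.inf F = σᶜ := by ext; simp [F, mem_inf]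
    simp [nerveF, hinf, nonempty_iff_ne_empty]
  refine ⟨n, F, ⟨fun i => card_pos.1 ?_, fun σ _ hσ => connected_induce_top (by exact_mod_cast hσ)⟩,
    bdry {univ}, fun τ hτ => ?_, bdry_bdry _, fun b hb hbc => ?_⟩
  · rw [card_erase_of_mem (mem_univ i), card_univ, Fintype.card_fin]
    omega
  · rw [mem_bdry_singleton] at hτ
    have hcard := (covBy_iff_subset_and_card.1 hτ).2
    rw [card_univ, Fintype.card_fin] at hcard
    exact ⟨(hnerve τ).2 ⟨card_pos.1 (by omega), hτ.ne⟩, by omega⟩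
  · obtain rfl : b = ∅ := eq_empty_of_forall_notMem fun σ hσ => by
      obtain ⟨hσK, hcard⟩ := hb σ hσ
      exact ((hnerve σ).1 hσK).2 (eq_univ_of_card σ (by rw [hcard, Fintype.card_fin]; omega))
    have hfacet : (univ : Finset (Fin n)).erase ⟨0, by omega⟩ ∈ bdry {univ} :=
      mem_bdry_singleton.2 (erase_covBy (mem_univ _))
    rw [← hbc, bdry_empty] at hfacet
    exact notMem_empty _ hfacet

theorem stmt6_general (n : ℕ) :
    HomDimEq (⊤ : SimpleGraph (Fin n)) ((n : ℤ) - 2) := by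
  refine ⟨fun d hd => not_gammaGe_of_card_le ⊤ (by rw [Fintype.card_fin]; omega), fun d hd => ?_⟩
  obtain rfl : d = n - 2 := by omega
  exact gammaGe_top_sub_two (by omega)

/-- the homological dimension of the complete graph `K_n` equals `n - 2`
for every `n ≥ 1`. -/
theorem stmt6 (n : ℕ) (hn : 1 ≤ n) :
    HomDimEq (⊤ : SimpleGraph (Fin n)) ((n : ℤ) - 2) :=
  stmt6_general n
end

section
/- Let F be a 2-connected cover in a planar graph G embedded in the sphere (G and all members of F are 2-connected). Let G_x ∈ F, let f be a face of G_x with U the set of vertices of G interior to f, and let G_x' = G[V(G_x) ∪ U]. Then F' = (F \ {G_x}) ∪ {G_x'} is again a 2-connected cover of G. -/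
open Finset

/-- A plane (equivalently, sphere) embedding of the simple graph `G`: vertices are
distinct points of the plane, each edge is drawn as a simple arc between the images of
its endpoints, arcs meet vertex points only at their endpoints, and two arcs of distinct
edges meet only in common endpoints. -/
structure PlaneEmbedding {V : Type} (G : SimpleGraph V) where
  pos : V → ℝ × ℝ
  inj : Function.Injective pos
  arc : ∀ u v, G.Adj u v → Path (pos u) (pos v)
  arc_inj : ∀ u v (h : G.Adj u v), Function.Injective ⇑(arc u v h)
  arc_symm : ∀ u v (h : G.Adj u v), Set.range ⇑(arc v u h.symm) = Set.range ⇑(arc u v h)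
  arc_vertex : ∀ u v (h : G.Adj u v) (w : V),
    pos w ∈ Set.range ⇑(arc u v h) → w = u ∨ w = v
  arc_disj : ∀ u v (h : G.Adj u v) u' v' (h' : G.Adj u' v'), s(u, v) ≠ s(u', v') →
    Set.range ⇑(arc u v h) ∩ Set.range ⇑(arc u' v' h') ⊆
      ({pos u, pos v} : Set (ℝ × ℝ)) ∩ {pos u', pos v'}

/-- The drawing (point set in the plane) of the subgraph of `G` induced by `S`. -/
def drawing {V : Type} {G : SimpleGraph V} (E : PlaneEmbedding G) (S : Set V) :
    Set (ℝ × ℝ) :=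
  (E.pos '' S) ∪
    ⋃ u, ⋃ v, ⋃ (_ : u ∈ S), ⋃ (_ : v ∈ S), ⋃ (h : G.Adj u v), Set.range ⇑(E.arc u v h)

/-- `f` is a face of the induced subgraph on `S` in the embedding `E`: a connected
component of the complement of its drawing. -/
def IsFaceOf {V : Type} {G : SimpleGraph V} (E : PlaneEmbedding G) (S : Set V)
    (f : Set (ℝ × ℝ)) : Prop :=
  ∃ x ∈ (drawing E S)ᶜ, f = connectedComponentIn (drawing E S)ᶜ x

/-- The induced subgraph of `G` on `S` is 2-connected: it has at least 3 vertices and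
deleting any single vertex leaves it connected. -/
def TwoConnectedOn {V : Type} (G : SimpleGraph V) (S : Set V) : Prop :=
  3 ≤ S.ncard ∧ ∀ v ∈ S, (G.induce (S \ {v})).Connected

/-! An edge leaving a vertex drawn inside the face `f` of `F x` ends in `F x` or again inside `f`,
because its arc is connected and avoids the drawing of `F x`. So no edge leaves `U` except into
`F x`, and filling preserves connectivity of every trace `(F x ∪ U) ∩ P` on a connected set `P`
whose trace `F x ∩ P` is connected or empty: a walk in `P` from a vertex of `U` stays in `U` until
it first meets `F x`. The intersections involving the filled member are such traces, with `P` the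
intersection of the other members (all of `V` if there are none), and so are the deletions
`(F x ∪ U) \ {v}`, with `P = {v}ᶜ`. -/

namespace Finset

variable {ι α : Type*} [DecidableEq ι] [SemilatticeInf α] [OrderTop α]

lemma inf_update_of_notMem {s : Finset ι} {i : ι} (h : i ∉ s) (f : ι → α) (b : α) :
    s.inf (Function.update f i b) = s.inf f :=
  inf_congr rfl fun _ hj => Function.update_of_ne (ne_of_mem_of_not_mem hj h) _ _

lemma inf_update_of_mem {s : Finset ι} {i : ι} (h : i ∈ s) (f : ι → α) (b : α) :
    s.inf (Function.update f i b) = b ⊓ (s.erase i).inf f := by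
  rw [← insert_erase h, inf_insert, Function.update_self,
    inf_update_of_notMem (notMem_erase i s), erase_insert_eq_erase, erase_idem]

end Finset

namespace SimpleGraph

variable {V : Type*} {G : SimpleGraph V} {S U P : Set V}

lemma Connected.exists_walk_support_subset (hP : (G.induce P).Connected) {a b : V}
    (ha : a ∈ P) (hb : b ∈ P) : ∃ w : G.Walk a b, ∀ d ∈ w.support, d ∈ P := by
  obtain ⟨w⟩ := hP.preconnected ⟨a, ha⟩ ⟨b, hb⟩
  refine ⟨w.map (Embedding.induce P).toHom, fun d hd => ?_⟩
  erw [Walk.support_map, List.mem_map] at hd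
  obtain ⟨d, -, rfl⟩ := hd
  exact d.2

lemma Walk.end_mem_of_forall_adj (hU : ∀ u ∈ U, ∀ v, G.Adj u v → v ∈ S ∪ U) :
    ∀ {a b : V} (w : G.Walk a b), a ∈ U → (∀ d ∈ w.support, d ∉ S) → b ∈ U
  | _, _, .nil, ha, _ => ha
  | a, _, .cons h p, ha, hS =>
    p.end_mem_of_forall_adj hU ((hU a ha _ h).resolve_left (hS _ (by simp)))
      fun d hd => hS d (by simp [hd])

lemma Walk.exists_walk_to_of_forall_adj (hU : ∀ u ∈ U, ∀ v, G.Adj u v → v ∈ S ∪ U) :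
    ∀ {a b : V} (w : G.Walk a b), (∀ d ∈ w.support, d ∈ P) → a ∈ S ∪ U → b ∈ S →
      ∃ c ∈ S, ∃ w' : G.Walk a c, ∀ d ∈ w'.support, d ∈ (S ∪ U) ∩ P
  | _, _, .nil, hw, _, hb => ⟨_, hb, .nil, by simpa using ⟨Or.inl hb, hw _ (by simp)⟩⟩
  | a, _, .cons h p, hw, ha, hb => by
    have haP : a ∈ P := hw a (by simp)
    by_cases haS : a ∈ S
    · exact ⟨a, haS, .nil, by simpa using ⟨Or.inl haS, haP⟩⟩
    obtain ⟨c, hc, w', hw'⟩ := p.exists_walk_to_of_forall_adj hU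
      (fun d hd => hw d (by simp [hd])) (hU a (ha.resolve_left haS) _ h) hb
    refine ⟨c, hc, .cons h w', ?_⟩
    simpa using ⟨⟨ha, haP⟩, hw'⟩

theorem connected_induce_union_inter (hU : ∀ u ∈ U, ∀ v, G.Adj u v → v ∈ S ∪ U)
    (hP : (G.induce P).Connected) (hSP : (S ∩ P).Nonempty → (G.induce (S ∩ P)).Connected)
    (hne : ((S ∪ U) ∩ P).Nonempty) : (G.induce ((S ∪ U) ∩ P)).Connected := by
  obtain ⟨c₀, hc₀⟩ | hSP_empty := (S ∩ P).eq_empty_or_nonempty.symm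
  · have hsub : S ∩ P ⊆ (S ∪ U) ∩ P := Set.inter_subset_inter_left _ Set.subset_union_left
    rw [connected_iff_exists_forall_reachable]
    refine ⟨⟨c₀, hsub hc₀⟩, fun ⟨t, ht⟩ => ?_⟩
    have reach_S : ∀ c (hc : c ∈ S ∩ P),
        (G.induce ((S ∪ U) ∩ P)).Reachable ⟨c₀, hsub hc₀⟩ ⟨c, hsub hc⟩ := fun c hc =>
      ((hSP ⟨c₀, hc₀⟩).preconnected ⟨c₀, hc₀⟩ ⟨c, hc⟩).map
        (induceHomOfLE G hsub).toHom
    obtain ⟨w, hw⟩ := hP.exists_walk_support_subset ht.2 hc₀.2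
    obtain ⟨c, hcS, w', hw'⟩ := w.exists_walk_to_of_forall_adj hU hw ht.1 hc₀.1
    exact (reach_S c ⟨hcS, (hw' c w'.end_mem_support).2⟩).trans
      ⟨(w'.induce _ hw').reverse⟩
  · obtain ⟨a, haSU, haP⟩ := hne
    have haU : a ∈ U := haSU.resolve_left fun haS => hSP_empty.subset ⟨haS, haP⟩
    have hP_sub : P ⊆ U := fun b hb => by
      obtain ⟨w, hw⟩ := hP.exists_walk_support_subset haP hb
      exact w.end_mem_of_forall_adj hU haU fun d hd hdS => hSP_empty.subset ⟨hdS, hw d hd⟩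
    rwa [Set.inter_eq_right.mpr (hP_sub.trans Set.subset_union_right)]

end SimpleGraph

section TwoConnected

variable {V : Type} {G : SimpleGraph V} {S : Set V}

theorem TwoConnectedOn.connected (h : TwoConnectedOn G S) : (G.induce S).Connected := by
  obtain ⟨a, ha, b, hb, c, hc, hab, hac, hbc⟩ :=
    (Set.two_lt_ncard (Set.finite_of_ncard_pos (by have := h.1; omega))).mp h.1
  have hS : S = (S \ {a}) ∪ (S \ {b}) := by
    rw [← Set.sdiff_inter, Set.singleton_inter_eq_empty.mpr (Set.mem_singleton_iff.not.mpr hab),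
      Set.sdiff_empty]
  rw [hS]
  exact SimpleGraph.induce_union_connected (h.2 a ha).preconnected (h.2 b hb).preconnected
    ⟨c, ⟨hc, hac.symm⟩, ⟨hc, hbc.symm⟩⟩

theorem TwoConnectedOn.connected_diff (h : TwoConnectedOn G S) (v : V) :
    (G.induce (S \ {v})).Connected := by
  by_cases hv : v ∈ S
  · exact h.2 v hv
  · rw [Set.sdiff_singleton_eq_self hv]
    exact h.connected

theorem TwoConnectedOn.union_of_forall_adj {U : Set V} (hG : TwoConnectedOn G Set.univ)
    (hS : TwoConnectedOn G S) (hU : ∀ u ∈ U, ∀ v, G.Adj u v → v ∈ S ∪ U) :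
    TwoConnectedOn G (S ∪ U) := by
  have hfin : (S ∪ U).Finite :=
    (Set.finite_of_ncard_pos (by have := hG.1; omega)).subset (Set.subset_univ _)
  refine ⟨hS.1.trans (Set.ncard_le_ncard Set.subset_union_left hfin), fun v _ => ?_⟩
  rw [Set.sdiff_eq_compl_inter, Set.inter_comm]
  refine SimpleGraph.connected_induce_union_inter hU ?_ (fun _ => ?_) ?_
  · rw [Set.compl_eq_univ_sdiff]
    exact hG.2 v trivial
  · rw [← Set.sdiff_eq]
    exact hS.connected_diff v
  · obtain ⟨w, hw, hwv⟩ := Set.exists_ne_of_one_lt_ncard (s := S) (by have := hS.1; omega) v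
    exact ⟨w, Or.inl hw, hwv⟩

end TwoConnected

theorem IsConnCover.update_union {V ι : Type} [DecidableEq V] [Fintype V] [Fintype ι]
    [DecidableEq ι] {G : SimpleGraph V} {F : ι → Finset V} {x : ι} {U : Finset V}
    (hcov : IsConnCover G F) (hG : (G.induce (Set.univ : Set V)).Connected)
    (hU : ∀ u ∈ (U : Set V), ∀ v, G.Adj u v → v ∈ (F x : Set V) ∪ U) :
    IsConnCover G (Function.update F x (F x ∪ U)) := by
  refine ⟨fun i => ?_, fun σ hσ hne => ?_⟩
  · rcases eq_or_ne i x with rfl | hi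
    · simpa using (hcov.1 i).mono Finset.subset_union_left
    · simpa [hi] using hcov.1 i
  by_cases hx : x ∈ σ
  · have hσF : σ.inf F = F x ⊓ (σ.erase x).inf F := by
      simpa using Finset.inf_update_of_mem hx F (F x)
    rw [Finset.inf_update_of_mem hx, Finset.inf_eq_inter] at hne ⊢
    rw [Finset.coe_inter, Finset.coe_union]
    refine SimpleGraph.connected_induce_union_inter hU ?_ (fun h => ?_) (by exact_mod_cast hne)
    · rcases (σ.erase x).eq_empty_or_nonempty with he | he
      · rwa [he, Finset.inf_empty, Finset.top_eq_univ, Finset.coe_univ]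
      · exact hcov.2 _ he (hne.mono Finset.inter_subset_right)
    · rw [← Finset.coe_inter, ← Finset.inf_eq_inter, ← hσF] at h ⊢
      exact hcov.2 σ hσ (mod_cast h)
  · rw [Finset.inf_update_of_notMem hx] at hne ⊢
    exact hcov.2 σ hσ hne

namespace PlaneEmbedding

variable {V : Type} {G : SimpleGraph V} (E : PlaneEmbedding G) {S : Set V}
  {f : Set (ℝ × ℝ)} {u v : V}

lemma pos_mem_drawing (hu : u ∈ S) : E.pos u ∈ drawing E S :=
  Or.inl ⟨u, hu, rfl⟩

lemma notMem_of_pos_mem_face (hf : IsFaceOf E S f) (hu : E.pos u ∈ f) : u ∉ S := by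
  obtain ⟨p, -, rfl⟩ := hf
  exact fun huS => connectedComponentIn_subset _ _ hu (E.pos_mem_drawing huS)

lemma range_arc_subset_compl_drawing (hu : u ∉ S) (hv : v ∉ S) (h : G.Adj u v) :
    Set.range (E.arc u v h) ⊆ (drawing E S)ᶜ := by
  have hvert : ∀ w ∈ S, E.pos w ∉ Set.range (E.arc u v h) := fun w hw hp => by
    rcases E.arc_vertex u v h w hp with rfl | rfl
    exacts [hu hw, hv hw]
  rintro p hp (⟨w, hw, rfl⟩ | hpD)
  · exact hvert w hw hp
  simp only [Set.mem_iUnion] at hpD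
  obtain ⟨u', v', hu', hv', h', hp'⟩ := hpD
  have hne : s(u, v) ≠ s(u', v') := fun he => by
    rcases Sym2.eq_iff.mp he with ⟨rfl, -⟩ | ⟨rfl, -⟩
    exacts [hu hu', hu hv']
  rcases (E.arc_disj u v h u' v' h' hne ⟨hp, hp'⟩).2 with rfl | rfl
  exacts [hvert u' hu' hp, hvert v' hv' hp]

theorem pos_mem_face_of_adj (hf : IsFaceOf E S f) (hu : E.pos u ∈ f) (h : G.Adj u v) :
    E.pos v ∈ f ∨ v ∈ S := by
  refine or_iff_not_imp_right.mpr fun hv => ?_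
  have harc := E.range_arc_subset_compl_drawing (E.notMem_of_pos_mem_face hf hu) hv h
  obtain ⟨p, -, rfl⟩ := hf
  rw [connectedComponentIn_eq hu]
  exact (isPreconnected_range (E.arc u v h).continuous).subset_connectedComponentIn
    ⟨0, (E.arc u v h).source⟩ harc ⟨1, (E.arc u v h).target⟩

end PlaneEmbedding

/-- let `F` be a 2-connected cover in a planar graph `G` with a fixed
embedding (`G` and every member are 2-connected).  If `F'` is obtained from `F` by
filling a face of the member `F x` (adding all vertices of `G` interior to that face),
then `F'` is again a 2-connected cover of `G`. -/
theorem stmt12 {V : Type} [Fintype V] [DecidableEq V] (G : SimpleGraph V)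
    (E : PlaneEmbedding G) (n : ℕ) (F : Fin n → Finset V)
    (hcov : IsConnCover G F)
    (hG2 : TwoConnectedOn G Set.univ)
    (h2 : ∀ i, TwoConnectedOn G ((F i : Finset V) : Set V))
    (x : Fin n) (f : Set (ℝ × ℝ)) (hf : IsFaceOf E ((F x : Finset V) : Set V) f)
    (U : Finset V) (hU : (U : Set V) = {w : V | E.pos w ∈ f}) :
    IsConnCover G (Function.update F x (F x ∪ U)) ∧
    ∀ i, TwoConnectedOn G (((Function.update F x (F x ∪ U)) i : Finset V) : Set V) := by
  have hU_adj : ∀ u ∈ (U : Set V), ∀ v, G.Adj u v → v ∈ (F x : Set V) ∪ U := by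
    intro u hu v h
    rw [hU] at hu ⊢
    exact (E.pos_mem_face_of_adj hf hu h).symm
  refine ⟨hcov.update_union hG2.connected hU_adj, fun i => ?_⟩
  rcases eq_or_ne i x with rfl | hi
  · rw [Function.update_self, Finset.coe_union]
    exact hG2.union_of_forall_adj (h2 i) hU_adj
  · simpa [hi] using h2 i
end

section
/- Let K be a simplicial complex, x a vertex of K, L a subcomplex of K − x, and K_{(x,L)} = K ∪ {σ ∪ {x} : σ ∈ L}. Every (x,L)-critical d-cycle γ₀ ∈ Z_d(K) (i.e., γ₀ ∉ B_d(K) but γ₀ ∈ B_d(K_{(x,L)}), over Z/2) is homologous in K to a d-cycle of the form γ = ∂[x, β] where β = Σ σ_i ∈ C_d(L), each σ_i ∪ {x} lies in K_{(x,L)} \ K, and [x, ∂β] ∈ C_d(K). -/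
open Finset

/-- `c` is a `d`-boundary in `K` (over `Z/2`). -/
def IsBdryOf {V : Type} [DecidableEq V] (K : Finset (Finset V)) (d : ℕ)
    (c : Finset (Finset V)) : Prop :=
  ∃ b : Finset (Finset V), IsChainOf K (d + 1) b ∧ bdry b = c

lemma mem_bdry_s13 {V : Type} [DecidableEq V] (c : Finset (Finset V)) (τ : Finset V) :
    τ ∈ bdry c ↔ Odd ((c.filter fun σ => τ ⊆ σ ∧ τ.card + 1 = σ.card).card) := by
  constructor
  · intro h; exact (mem_filter.1 h).2
  · intro h
    refine mem_filter.2 ⟨?_, h⟩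
    have hpos : 0 < (c.filter fun σ => τ ⊆ σ ∧ τ.card + 1 = σ.card).card := by
      rcases h with ⟨k, hk⟩; omega
    obtain ⟨σ, hσ⟩ := Finset.card_pos.1 hpos
    rw [mem_filter] at hσ
    exact Finset.mem_sup.2 ⟨σ, hσ.1, Finset.mem_powerset.2 hσ.2.1⟩

lemma exists_coface_of_mem_bdry {V : Type} [DecidableEq V] {c : Finset (Finset V)}
    {τ : Finset V} (h : τ ∈ bdry c) : ∃ σ ∈ c, τ ⊆ σ ∧ τ.card + 1 = σ.card := by
  rw [mem_bdry_s13] at h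
  have hpos : 0 < (c.filter fun σ => τ ⊆ σ ∧ τ.card + 1 = σ.card).card := by
    rcases h with ⟨k, hk⟩; omega
  obtain ⟨σ, hσ⟩ := Finset.card_pos.1 hpos
  rw [mem_filter] at hσ
  exact ⟨σ, hσ.1, hσ.2⟩

lemma card_symmDiff' {α : Type*} [DecidableEq α] (A B : Finset α) :
    (symmDiff A B).card + 2 * (A ∩ B).card = A.card + B.card := by
  have h1 : symmDiff A B = (A \ B) ∪ (B \ A) := rfl
  have hd : Disjoint (A \ B) (B \ A) := by
    apply Finset.disjoint_left.2; intro a ha hb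
    exact (Finset.mem_sdiff.1 hb).2 (Finset.mem_sdiff.1 ha).1
  have h2 := Finset.card_sdiff_add_card_inter A B
  have h3 := Finset.card_sdiff_add_card_inter B A
  rw [h1, Finset.card_union_of_disjoint hd]
  rw [Finset.inter_comm] at h3
  omega

lemma bdry_symmDiff_s13 {V : Type} [DecidableEq V] (A B : Finset (Finset V)) :
    bdry (symmDiff A B) = symmDiff (bdry A) (bdry B) := by
  ext τ
  have hf : (symmDiff A B).filter (fun σ => τ ⊆ σ ∧ τ.card + 1 = σ.card)
      = symmDiff (A.filter fun σ => τ ⊆ σ ∧ τ.card + 1 = σ.card)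
          (B.filter fun σ => τ ⊆ σ ∧ τ.card + 1 = σ.card) := by
    ext σ; simp only [Finset.mem_filter, Finset.mem_symmDiff]; tauto
  rw [Finset.mem_symmDiff, mem_bdry_s13, mem_bdry_s13, mem_bdry_s13, hf]
  have h2 := card_symmDiff' (A.filter fun σ => τ ⊆ σ ∧ τ.card + 1 = σ.card)
      (B.filter fun σ => τ ⊆ σ ∧ τ.card + 1 = σ.card)
  simp only [Nat.odd_iff] at *
  omega

lemma insert_injOn {V : Type} [DecidableEq V] (x : V) (β : Finset (Finset V))
    (hβ : ∀ σ ∈ β, x ∉ σ) : Set.InjOn (insert x) (β : Set (Finset V)) := by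
  intro a ha b hb h
  have : (insert x a).erase x = (insert x b).erase x := by rw [h]
  rwa [Finset.erase_insert (hβ a ha), Finset.erase_insert (hβ b hb)] at this

lemma bdry_cone_s13 {V : Type} [DecidableEq V] (x : V) (β : Finset (Finset V))
    (hβ : ∀ σ ∈ β, x ∉ σ) :
    bdry (β.image (insert x)) = symmDiff β ((bdry β).image (insert x)) := by
  have hbx : ∀ τ' ∈ bdry β, x ∉ τ' := by
    intro τ' hτ'
    obtain ⟨σ, hσ, hsub, _⟩ := exists_coface_of_mem_bdry hτ'
    exact fun hx => hβ σ hσ (hsub hx)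
  ext τ
  rw [mem_bdry_s13, Finset.filter_image, Finset.mem_symmDiff]
  have hcards : ∀ σ ∈ β, (insert x σ).card = σ.card + 1 := fun σ hσ =>
    Finset.card_insert_of_notMem (hβ σ hσ)
  by_cases hx : x ∈ τ
  · -- τ contains x
    have hτβ : τ ∉ β := fun h => hβ τ h hx
    have key : (β.filter fun σ => τ ⊆ insert x σ ∧ τ.card + 1 = (insert x σ).card)
        = β.filter fun σ => τ.erase x ⊆ σ ∧ (τ.erase x).card + 1 = σ.card := by
      apply Finset.filter_congr
      intro σ hσ
      rw [Finset.subset_insert_iff]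
      have h1 : τ.card = (τ.erase x).card + 1 := by
        rw [Finset.card_erase_of_mem hx]
        have : 0 < τ.card := Finset.card_pos.2 ⟨x, hx⟩
        omega
      have h2 := hcards σ hσ
      constructor <;> intro ⟨ha, hb⟩ <;> exact ⟨ha, by omega⟩
    have himg : τ ∈ (bdry β).image (insert x) ↔ τ.erase x ∈ bdry β := by
      constructor
      · rintro h
        obtain ⟨τ', hτ', rfl⟩ := Finset.mem_image.1 h
        rwa [Finset.erase_insert (hbx τ' hτ')]
      · intro h
        exact Finset.mem_image.2 ⟨τ.erase x, h, Finset.insert_erase hx⟩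
    rw [Finset.card_image_of_injOn]
    · rw [key, himg, ← mem_bdry_s13]
      tauto
    · exact (insert_injOn x β hβ).mono (Finset.filter_subset _ _)
  · -- x ∉ τ
    have himg : τ ∉ (bdry β).image (insert x) := by
      intro h
      obtain ⟨τ', _, rfl⟩ := Finset.mem_image.1 h
      exact hx (Finset.mem_insert_self x τ')
    have key : (β.filter fun σ => τ ⊆ insert x σ ∧ τ.card + 1 = (insert x σ).card)
        = β.filter fun σ => σ = τ := by
      apply Finset.filter_congr
      intro σ hσ
      have h2 := hcards σ hσ
      constructor
      · rintro ⟨ha, hb⟩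
        have hsub : τ ⊆ σ := fun a haτ => by
          rcases Finset.mem_insert.1 (ha haτ) with h | h
          · exact absurd (h ▸ haτ) hx
          · exact h
        exact (Finset.eq_of_subset_of_card_le hsub (by omega)).symm
      · rintro rfl
        exact ⟨Finset.subset_insert _ _, by omega⟩
    rw [Finset.card_image_of_injOn ((insert_injOn x β hβ).mono (Finset.filter_subset _ _)), key]
    by_cases hτβ : τ ∈ β
    · have : β.filter (fun σ => σ = τ) = {τ} := by
        ext σ; simp only [Finset.mem_filter, Finset.mem_singleton]
        exact ⟨fun h => h.2, fun h => ⟨h ▸ hτβ, h⟩⟩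
      rw [this]
      simp [hτβ, himg]
    · have : β.filter (fun σ => σ = τ) = ∅ := by
        ext σ; simp only [Finset.mem_filter, Finset.notMem_empty, iff_false]
        rintro ⟨h, rfl⟩; exact hτβ h
      rw [this]
      simp [hτβ, himg, Nat.odd_iff]

/-- let `L ⊆ K - x` be a subcomplex and `K_{(x,L)} = K ∪ {σ ∪ {x} : σ ∈ L}`.
Every `(x,L)`-critical `d`-cycle `γ₀` (a cycle of `K` that is not a boundary in `K` but
is a boundary in `K_{(x,L)}`) is homologous in `K` to a cycle `γ = ∂[x, β]` where
`β ∈ C_d(L)`, each `σ ∪ {x}` for `σ ∈ β` lies in `K_{(x,L)} \ K`, and `[x, ∂β] ∈ C_d(K)`.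
Here the cone `[x, β]` is `β.image (insert x)` and "homologous" means that
`γ₀ + γ ∈ B_d(K)` over `Z/2`. -/
theorem stmt13 {V : Type} [DecidableEq V] (K L : Finset (Finset V)) (x : V)
    (hKcx : ∀ σ ∈ K, ∀ τ ⊆ σ, τ.Nonempty → τ ∈ K)
    (hLK : L ⊆ K) (hLx : ∀ σ ∈ L, x ∉ σ)
    (hLcx : ∀ σ ∈ L, ∀ τ ⊆ σ, τ.Nonempty → τ ∈ L)
    (d : ℕ) (γ₀ : Finset (Finset V))
    (hch : IsChainOf K d γ₀) (hcyc : bdry γ₀ = ∅)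
    (hnotbd : ¬ IsBdryOf K d γ₀)
    (hbd : IsBdryOf (K ∪ L.image (insert x)) d γ₀) :
    ∃ β : Finset (Finset V),
      IsChainOf L d β ∧
      (∀ σ ∈ β, insert x σ ∉ K) ∧
      (∀ τ ∈ bdry β, insert x τ ∈ K) ∧
      IsBdryOf K d (symmDiff γ₀ (bdry (β.image (insert x)))) := by
  classical
  obtain ⟨b, hbch, hbbd⟩ := hbd
  set b₁ := b.filter (fun s => s ∈ K) with hb1def
  set b₂ := b.filter (fun s => s ∉ K) with hb2def
  have hb₂ : ∀ s ∈ b₂, ∃ σ ∈ L, x ∉ σ ∧ s = insert x σ ∧ σ.card = d + 1 := by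
    intro s hs
    rw [hb2def, Finset.mem_filter] at hs
    obtain ⟨hsb, hsK⟩ := hs
    rcases Finset.mem_union.1 (hbch s hsb).1 with h | h
    · exact absurd h hsK
    obtain ⟨σ, hσL, rfl⟩ := Finset.mem_image.1 h
    have hxσ := hLx σ hσL
    have hcard : (insert x σ).card = σ.card + 1 := Finset.card_insert_of_notMem hxσ
    have hc2 := (hbch _ hsb).2
    exact ⟨σ, hσL, hxσ, rfl, by omega⟩
  set β := b₂.image (fun s => s.erase x) with hβdef
  have hβmem : ∀ σ ∈ β, σ ∈ L ∧ x ∉ σ ∧ insert x σ ∈ b₂ ∧ σ.card = d + 1 := by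
    intro σ hσ
    obtain ⟨s, hs, rfl⟩ := Finset.mem_image.1 hσ
    obtain ⟨σ', hσ'L, hx, rfl, hc⟩ := hb₂ s hs
    rw [Finset.erase_insert hx]
    exact ⟨hσ'L, hx, hs, hc⟩
  have hβx : ∀ σ ∈ β, x ∉ σ := fun σ hσ => (hβmem σ hσ).2.1
  have hcone_eq : β.image (insert x) = b₂ := by
    ext s
    constructor
    · intro h
      obtain ⟨σ, hσ, rfl⟩ := Finset.mem_image.1 h
      exact (hβmem σ hσ).2.2.1
    · intro hs
      obtain ⟨σ, _, hx, rfl, _⟩ := hb₂ s hs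
      refine Finset.mem_image.2 ⟨σ, ?_, rfl⟩
      rw [hβdef]
      exact Finset.mem_image.2 ⟨insert x σ, hs, Finset.erase_insert hx⟩
  have hsplit : symmDiff b₁ b₂ = b := by
    ext s
    rw [Finset.mem_symmDiff, hb1def, hb2def]
    simp only [Finset.mem_filter]
    tauto
  have hγ : γ₀ = symmDiff (bdry b₁) (bdry b₂) := by
    rw [← hbbd, ← hsplit, bdry_symmDiff_s13]
  have hb₁chain : IsChainOf K (d + 1) b₁ := by
    intro s hs
    rw [hb1def, Finset.mem_filter] at hs
    exact ⟨hs.2, (hbch s hs.1).2⟩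
  have hbdryb₁K : ∀ τ ∈ bdry b₁, τ ∈ K := by
    intro τ hτ
    obtain ⟨σ, hσ, hsub, hc⟩ := exists_coface_of_mem_bdry hτ
    obtain ⟨hσK, hσc⟩ := hb₁chain σ hσ
    have hne : τ.Nonempty := Finset.card_pos.1 (by omega)
    exact hKcx σ hσK τ hsub hne
  have hb₂eq : bdry b₂ = symmDiff (bdry b₁) γ₀ := by
    rw [hγ, symmDiff_symmDiff_cancel_left]
  have hγb₂ : symmDiff γ₀ (bdry b₂) = bdry b₁ := by
    rw [hγ, symmDiff_symmDiff_cancel_right]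
  refine ⟨β, ?_, ?_, ?_, ?_⟩
  · intro σ hσ
    exact ⟨(hβmem σ hσ).1, (hβmem σ hσ).2.2.2⟩
  · intro σ hσ
    have := (hβmem σ hσ).2.2.1
    rw [hb2def, Finset.mem_filter] at this
    exact this.2
  · intro τ hτ
    have hconebdry : bdry b₂ = symmDiff β ((bdry β).image (insert x)) := by
      rw [← hcone_eq]; exact bdry_cone_s13 x β hβx
    have h1 : insert x τ ∈ (bdry β).image (insert x) := Finset.mem_image_of_mem _ hτ
    have h2 : insert x τ ∉ β := fun h => hβx _ h (Finset.mem_insert_self x τ)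
    have h3 : insert x τ ∈ bdry b₂ := by
      rw [hconebdry, Finset.mem_symmDiff]; exact Or.inr ⟨h1, h2⟩
    rw [hb₂eq, Finset.mem_symmDiff] at h3
    rcases h3 with ⟨h, _⟩ | ⟨h, _⟩
    · exact hbdryb₁K _ h
    · exact (hch _ h).1
  · rw [hcone_eq]
    exact ⟨b₁, hb₁chain, hγb₂.symm⟩
end
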